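/- arXiv:1003.4422 — 7 statements merged into one kernel-verified Lean document; each statement's English description precedes it below -/
import Mathlib

section
/- Let N = k^t q with k ≥ 2, t ≥ 1, gcd(q,k) = 1, and let M = ord_k(N - q) be the multiplicative order of k modulo N - q. Then t divides M. -/
theorem t_dvd_order (N k t q : ℕ) (hk : 2 ≤ k) (ht : 1 ≤ t) (hq : 1 ≤ q)
    (hco : Nat.Coprime q k) (hN : N = k ^ t * q) :
    t ∣ orderOf (k : ZMod (N - q)) := by
  set m := k ^ t - 1 with hm
  have hkt1 : 1 ≤ k ^ t := Nat.one_le_pow _ _ (by omega)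
  have hmq : N - q = m * q := by
    subst hN
    rw [hm, Nat.sub_mul, one_mul]
  have hdvd : m ∣ N - q := hmq ▸ dvd_mul_right m q
  have hord : orderOf (k : ZMod m) = t := by
    rw [orderOf_eq_iff ht]
    constructor
    · have : ((k : ZMod m)) ^ t = ((k ^ t : ℕ) : ZMod m) := by push_cast; ring
      rw [this]
      have : k ^ t = m + 1 := by omega
      rw [this]
      push_cast
      simp
    · intro s hs hs0 hcontra
      have : ((k ^ s : ℕ) : ZMod m) = ((1 : ℕ) : ZMod m) := by
        push_cast; exact hcontra
      rw [ZMod.natCast_eq_natCast_iff] at this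
      have hle : 1 ≤ k ^ s := Nat.one_le_pow _ _ (by omega)
      have hdvd2 : m ∣ k ^ s - 1 := (Nat.modEq_iff_dvd' hle).mp this.symm
      have hpos : 0 < k ^ s - 1 := by
        have : 2 ≤ k ^ s := by
          calc 2 ≤ k := hk
          _ = k ^ 1 := (pow_one k).symm
          _ ≤ k ^ s := Nat.pow_le_pow_right (by omega) hs0
        omega
      have hlt : k ^ s - 1 < m := by
        have : k ^ s < k ^ t := Nat.pow_lt_pow_right (by omega) hs
        omega
      have := Nat.le_of_dvd hpos hdvd2
      omega
  have hmap := orderOf_map_dvd (ZMod.castHom hdvd (ZMod m)).toMonoidHom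
      (k : ZMod (N - q))
  rw [← hord]
  simpa using hmap
end

section
/- Let N = k^t q with k ≥ 2, t ≥ 1, gcd(q,k)=1, and define the map f on Z/NZ by f(A) = kA + A_{t-1} mod N, where A_{t-1} is the coefficient of k^{t-1} in the base-k expansion of the representative of A in {0,...,N-1}. Then f is a bijection on Z/NZ. -/
/-!
Write `t = s + 1` and `N = k ^ (s + 1) * q`. Modulo `k ^ (s + 1)`, the map `A ↦ k * A + A_s`
rotates the last `s + 1` base-`k` digits of `A` cyclically, so two arguments with the same
image agree modulo `k ^ (s + 1)`. Then their digits `A_s` agree, hence `k * A ≡ k * B`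
modulo `N`, and cancelling `k` modulo `q` gives `A ≡ B` modulo `q`. The Chinese remainder
theorem concludes, and an injective self-map of a finite set is bijective.
-/

/-- The map `f` on representatives, with `t = s + 1`. -/
def digitShift (k s a : ℕ) : ℕ := k * a + a / k ^ s % k

/-- The last `s + 1` base-`k` digits of `a`, rotated cyclically by one place. -/
def digitRotate (k s a : ℕ) : ℕ := k * (a % k ^ s) + a / k ^ s % k

section
variable {k s a b : ℕ}

theorem digitShift_modEq_digitRotate : digitShift k s a ≡ digitRotate k s a [MOD k ^ (s + 1)] := by
  have hsplit : k * a = k ^ (s + 1) * (a / k ^ s) + k * (a % k ^ s) := by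
    conv_lhs => rw [← Nat.div_add_mod a (k ^ s)]
    ring
  rw [digitShift, digitRotate, hsplit, add_assoc]
  exact Nat.ModEq.symm (by simp [Nat.ModEq])

theorem digitRotate_lt (hk : 0 < k) : digitRotate k s a < k ^ (s + 1) := by
  have h1 : a % k ^ s < k ^ s := Nat.mod_lt _ (pow_pos hk s)
  have h2 : a / k ^ s % k < k := Nat.mod_lt _ hk
  calc k * (a % k ^ s) + a / k ^ s % k < k * (a % k ^ s) + k := by omega
    _ = k * (a % k ^ s + 1) := by ring
    _ ≤ k * k ^ s := Nat.mul_le_mul_left k h1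
    _ = k ^ (s + 1) := (pow_succ' k s).symm

theorem digitRotate_mod : digitRotate k s a % k = a / k ^ s % k := by
  simp [digitRotate]

theorem digitRotate_div (hk : 0 < k) : digitRotate k s a / k = a % k ^ s := by
  rw [digitRotate, Nat.mul_add_div hk, Nat.div_eq_of_lt (Nat.mod_lt _ hk), add_zero]

theorem modEq_of_digitRotate_eq (hk : 0 < k) (h : digitRotate k s a = digitRotate k s b) :
    a ≡ b [MOD k ^ (s + 1)] := by
  have hlow : a % k ^ s = b % k ^ s := by rw [← digitRotate_div hk, h, digitRotate_div hk]
  have hdigit : a / k ^ s % k = b / k ^ s % k := by rw [← digitRotate_mod, h, digitRotate_mod]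
  rw [Nat.ModEq, Nat.mod_pow_succ, Nat.mod_pow_succ, hlow, hdigit]

theorem modEq_pow_of_digitShift_modEq (hk : 0 < k)
    (h : digitShift k s a ≡ digitShift k s b [MOD k ^ (s + 1)]) : a ≡ b [MOD k ^ (s + 1)] :=
  modEq_of_digitRotate_eq hk <| Nat.ModEq.eq_of_lt_of_lt
    (digitShift_modEq_digitRotate.symm.trans (h.trans digitShift_modEq_digitRotate))
    (digitRotate_lt hk) (digitRotate_lt hk)

theorem modEq_of_digitShift_modEq {q : ℕ} (hk : 0 < k) (hco : q.Coprime k)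
    (h : digitShift k s a ≡ digitShift k s b [MOD k ^ (s + 1) * q]) :
    a ≡ b [MOD k ^ (s + 1) * q] := by
  have hpow : a ≡ b [MOD k ^ (s + 1)] :=
    modEq_pow_of_digitShift_modEq hk (h.of_mul_right q)
  have hdigit : a / k ^ s % k = b / k ^ s % k := by
    simpa only [pow_succ, Nat.mod_mul_right_div_self] using congrArg (· / k ^ s) hpow
  have hmul : k * a ≡ k * b [MOD k ^ (s + 1) * q] := by
    rw [digitShift, digitShift, hdigit] at h
    exact h.add_right_cancel' _
  have hq : a ≡ b [MOD q] := Nat.ModEq.cancel_left_of_coprime hco (hmul.of_mul_left _)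
  exact (Nat.modEq_and_modEq_iff_modEq_mul (hco.symm.pow_left _)).mp ⟨hpow, hq⟩

end

theorem shuffle_map_bijective_general (N k t q : ℕ) (ht : 1 ≤ t)
    (hco : Nat.Coprime q k) (hN : N = k ^ t * q) [NeZero N] :
    Function.Bijective (fun A : ZMod N =>
      (k : ZMod N) * A + ((A.val / k ^ (t - 1)) % k : ℕ)) := by
  obtain ⟨s, rfl⟩ : ∃ s, t = s + 1 := ⟨t - 1, by omega⟩
  have hk : 0 < k := Nat.pos_of_ne_zero fun hk0 => NeZero.ne N (by simp [hN, hk0])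
  refine Finite.injective_iff_bijective.mp fun A B h => ?_
  have hshift : digitShift k s A.val ≡ digitShift k s B.val [MOD N] := by
    rw [← ZMod.natCast_eq_natCast_iff]
    simpa [digitShift] using h
  subst hN
  have hval : A.val ≡ B.val [MOD k ^ (s + 1) * q] := modEq_of_digitShift_modEq hk hco hshift
  simpa using (ZMod.natCast_eq_natCast_iff _ _ _).mpr hval

theorem shuffle_map_bijective (N k t q : ℕ) (hk : 2 ≤ k) (ht : 1 ≤ t) (hq : 1 ≤ q)
    (hco : Nat.Coprime q k) (hN : N = k ^ t * q) [NeZero N] :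
    Function.Bijective (fun A : ZMod N =>
      (k : ZMod N) * A + ((A.val / k ^ (t - 1)) % k : ℕ)) :=
  shuffle_map_bijective_general N k t q ht hco hN
end

section
/- Let N = k^t q with k ≥ 2, t ≥ 1, gcd(q,k)=1, and define f on {0,...,N-1} by f(A) = (kA + A_{t-1}) mod N, where A_{t-1} is the coefficient of k^{t-1} in the base-k expansion of A. Let φ(A) = A_0 + A_1 + ... + A_{t-1} be the sum of the t lowest base-k digits of A. Then φ(f(A)) = φ(A) for all A. -/
/-! Multiplying by `k` and adding the digit `A_{t-1}` shifts the base-`k` digits of `A` up by one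
place and puts `A_{t-1}` into the vacated position `0`: the `t` lowest digits are rotated
cyclically, so their sum is unchanged. Reducing modulo `N = k ^ t * q` does not touch them, because
`k ^ t ∣ N`. -/

open Finset

namespace Nat

def lowDigitSum (k t A : ℕ) : ℕ := ∑ i ∈ range t, A / k ^ i % k

theorem digit_mod_of_pow_dvd {k t m i : ℕ} (x : ℕ) (hi : i < t) (hm : k ^ t ∣ m) :
    x % m / k ^ i % k = x / k ^ i % k := by
  have hdvd : k ^ i * k ∣ m := (pow_succ k i ▸ pow_dvd_pow k hi).trans hm
  rw [← Nat.mod_mul_right_div_self, ← Nat.mod_mul_right_div_self, Nat.mod_mod_of_dvd _ hdvd]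

theorem lowDigitSum_mod_of_pow_dvd {k t m : ℕ} (x : ℕ) (hm : k ^ t ∣ m) :
    lowDigitSum k t (x % m) = lowDigitSum k t x :=
  sum_congr rfl fun _ hi => digit_mod_of_pow_dvd x (mem_range.mp hi) hm

theorem digit_succ_mul_add {k d : ℕ} (A i : ℕ) (hd : d < k) :
    (k * A + d) / k ^ (i + 1) % k = A / k ^ i % k := by
  have hA : (k * A + d) / k = A := by
    rw [Nat.mul_add_div (by omega), Nat.div_eq_of_lt hd, Nat.add_zero]
  rw [pow_succ', ← Nat.div_div_eq_div_mul, hA]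

theorem lowDigitSum_succ_mul_add {k d : ℕ} (t A : ℕ) (hd : d < k) :
    lowDigitSum k (t + 1) (k * A + d) = lowDigitSum k t A + d := by
  have hdigit0 : (k * A + d) / k ^ 0 % k = d := by
    rw [pow_zero, Nat.div_one, Nat.mul_add_mod, Nat.mod_eq_of_lt hd]
  simp only [lowDigitSum, sum_range_succ', digit_succ_mul_add A _ hd, hdigit0]

theorem lowDigitSum_succ (k t A : ℕ) :
    lowDigitSum k (t + 1) A = lowDigitSum k t A + A / k ^ t % k :=
  sum_range_succ _ _

end Nat

theorem digit_sum_invariant_general (N k t q : ℕ) (hk : 2 ≤ k) (ht : 1 ≤ t)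
    (hN : N = k ^ t * q)
    (f : ℕ → ℕ) (hf : ∀ A, f A = (k * A + A / k ^ (t - 1) % k) % N)
    (φ : ℕ → ℕ) (hφ : ∀ A, φ A = ∑ i ∈ Finset.range t, A / k ^ i % k) :
    ∀ A < N, φ (f A) = φ A := by
  intro A _
  obtain ⟨s, rfl⟩ : ∃ s, t = s + 1 := ⟨t - 1, by omega⟩
  have hφsum : ∀ A, φ A = Nat.lowDigitSum k (s + 1) A := hφ
  have htop : A / k ^ s % k < k := Nat.mod_lt _ (by omega)
  rw [hφsum, hφsum, hf, Nat.add_sub_cancel, hN, Nat.lowDigitSum_mod_of_pow_dvd _ (dvd_mul_right _ _),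
    Nat.lowDigitSum_succ_mul_add _ _ htop, Nat.lowDigitSum_succ]

theorem digit_sum_invariant (N k t q : ℕ) (hk : 2 ≤ k) (ht : 1 ≤ t) (hq : 1 ≤ q)
    (hco : Nat.Coprime q k) (hN : N = k ^ t * q)
    (f : ℕ → ℕ) (hf : ∀ A, f A = (k * A + A / k ^ (t - 1) % k) % N)
    (φ : ℕ → ℕ) (hφ : ∀ A, φ A = ∑ i ∈ Finset.range t, A / k ^ i % k) :
    ∀ A < N, φ (f A) = φ A :=
  digit_sum_invariant_general N k t q hk ht hN f hf φ hφ
end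

section
/- Let N = k n = k^t q with k ≥ 2, t ≥ 1, gcd(q,k)=1, n = k^{t-1} q. Define φ(A) = A_0 + ... + A_{t-1} (sum of the t lowest base-k digits of A). Then for every ℓ ∈ {0,...,n-1}, the multiset {φ(ℓ), φ(ℓ+n), ..., φ(ℓ+(k-1)n)} equals the multiset {φ(kℓ), φ(kℓ+1), ..., φ(kℓ+k-1)}. -/
/-!
Write `n = q k^s` with `s = t - 1`. Adding `i n` to `ℓ` keeps the `s` lowest base-`k` digits of `ℓ`
and turns digit `s` into `(ℓ_s + i q) mod k`; passing to `k ℓ + i` shifts the digits `ℓ_0, …, ℓ_{s-1}`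
up by one place and puts `i` in place `0`. So both families are `S + x` with `S = ℓ_0 + ⋯ + ℓ_{s-1}`,
where `x` runs over `(ℓ_s + i q) mod k` resp. over `i`, and these agree as multisets because
`i ↦ i q` permutes the residues mod `k` when `gcd(q, k) = 1`.
-/

open Finset

def lowDigitSum (k t A : ℕ) : ℕ :=
  ∑ i ∈ range t, A / k ^ i % k

section lowDigitSum

variable {k : ℕ}

theorem lowDigitSum_succ (s A : ℕ) :
    lowDigitSum k (s + 1) A = lowDigitSum k s A + A / k ^ s % k :=
  sum_range_succ _ _

theorem lowDigitSum_succ' (s A : ℕ) :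
    lowDigitSum k (s + 1) A = lowDigitSum k s (A / k) + A % k := by
  simp only [lowDigitSum, sum_range_succ', pow_succ', ← Nat.div_div_eq_div_mul, pow_zero,
    Nat.div_one]

theorem lowDigitSum_add_mul_pow (hk : 0 < k) (s A m : ℕ) :
    lowDigitSum k s (A + m * k ^ s) = lowDigitSum k s A := by
  refine sum_congr rfl fun j hj => ?_
  obtain ⟨r, rfl⟩ := Nat.exists_eq_add_of_lt (mem_range.mp hj)
  have hpow : m * k ^ (j + r + 1) = (m * k ^ r) * k * k ^ j := by ring
  rw [hpow, Nat.add_mul_div_right _ _ (pow_pos hk j), Nat.add_mul_mod_self_right]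

theorem lowDigitSum_mul_add_of_lt (hk : 0 < k) (s A : ℕ) {i : ℕ} (hi : i < k) :
    lowDigitSum k (s + 1) (k * A + i) = lowDigitSum k s A + i := by
  have hdiv : (k * A + i) / k = A := by
    rw [add_comm, Nat.add_mul_div_left _ _ hk, Nat.div_eq_of_lt hi, zero_add]
  rw [lowDigitSum_succ', hdiv, Nat.mul_add_mod_self_left, Nat.mod_eq_of_lt hi]

end lowDigitSum

theorem multiset_map_add_mul_mod_range {q k : ℕ} (hco : q.Coprime k) (c : ℕ) :
    (range k).val.map (fun i => (c + i * q) % k) = (range k).val := by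
  have hinj : Set.InjOn (fun i => (c + i * q) % k) (range k) := by
    intro a ha b hb hab
    have hmod : a * q ≡ b * q [MOD k] := Nat.ModEq.add_left_cancel' c hab
    exact (hmod.cancel_right_of_coprime hco.symm).eq_of_lt_of_lt (mem_range.mp ha)
      (mem_range.mp hb)
  have hnodup := (range k).nodup.map_on fun a ha b hb => hinj ha hb
  refine Multiset.eq_of_le_of_card_le ((Multiset.le_iff_subset hnodup).mpr ?_) (by simp)
  intro x hx
  obtain ⟨a, ha, rfl⟩ := Multiset.mem_map.mp hx
  exact mem_range.mpr (Nat.mod_lt _ (Nat.zero_lt_of_lt (mem_range.mp ha)))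

theorem column_block_weights_general (n k t q : ℕ) (hk : 2 ≤ k) (ht : 1 ≤ t)
    (hco : Nat.Coprime q k) (hn : n = k ^ (t - 1) * q)
    (φ : ℕ → ℕ) (hφ : ∀ A, φ A = ∑ i ∈ Finset.range t, A / k ^ i % k) :
    ∀ ℓ < n,
      (Finset.range k).val.map (fun i => φ (ℓ + i * n)) =
      (Finset.range k).val.map (fun i => φ (k * ℓ + i)) := by
  intro ℓ _
  have hk0 : 0 < k := by omega
  obtain ⟨s, rfl⟩ : ∃ s, t = s + 1 := ⟨t - 1, by omega⟩
  obtain rfl : φ = lowDigitSum k (s + 1) := funext hφ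
  rw [Nat.add_sub_cancel] at hn
  subst hn
  set S := lowDigitSum k s ℓ
  have hcolumn : ∀ i, lowDigitSum k (s + 1) (ℓ + i * (k ^ s * q)) = S + (ℓ / k ^ s + i * q) % k :=
    fun i => by
      rw [show i * (k ^ s * q) = i * q * k ^ s by ring, lowDigitSum_succ,
        lowDigitSum_add_mul_pow hk0, Nat.add_mul_div_right _ _ (pow_pos hk0 s)]
  have hblock : ∀ i ∈ (range k).val, lowDigitSum k (s + 1) (k * ℓ + i) = S + i :=
    fun i hi => lowDigitSum_mul_add_of_lt hk0 s ℓ (mem_range.mp hi)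
  rw [Multiset.map_congr rfl fun i _ => hcolumn i, Multiset.map_congr rfl hblock]
  simpa only [Multiset.map_map, Function.comp_def] using
    congrArg (Multiset.map (S + ·)) (multiset_map_add_mul_mod_range hco (ℓ / k ^ s))

theorem column_block_weights (N n k t q : ℕ) (hk : 2 ≤ k) (ht : 1 ≤ t) (hq : 1 ≤ q)
    (hco : Nat.Coprime q k) (hN : N = k ^ t * q) (hn : n = k ^ (t - 1) * q)
    (φ : ℕ → ℕ) (hφ : ∀ A, φ A = ∑ i ∈ Finset.range t, A / k ^ i % k) :
    ∀ ℓ < n,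
      (Finset.range k).val.map (fun i => φ (ℓ + i * n)) =
      (Finset.range k).val.map (fun i => φ (k * ℓ + i)) :=
  column_block_weights_general n k t q hk ht hco hn φ hφ
end

section
/- Let N = k^t q with k ≥ 2, t ≥ 1, gcd(q,k)=1, and define f on {0,...,N-1} by f(A) = (kA + A_{t-1}) mod N, where A_{t-1} is the coefficient of k^{t-1} in the base-k expansion of A. For any x, the t-fold iterate satisfies f^t(x) ≡ k^t x + A' (mod N), where A' = Σ_{i=0}^{t-1} k^i x_i is the number formed by the t lowest base-k digits of x. -/
/-!
The digit of `A` in position `t - 1` only depends on `A mod kᵗ`, and `kᵗ ∣ N`, so reducing modulo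
`N` never changes the digit that `f` reads. Hence, for `j ≤ t`, `fʲ(x) ≡ kʲ x + c_j (mod N)`,
where `c_j` is the number formed by the digits of `x` in positions `t - j, …, t - 1`: each step
multiplies by `k` and appends the next lower digit of `x`. For `j = t` these are the `t` lowest
digits of `x`.
-/

namespace Nat

theorem mod_div_pow_mod_of_pow_succ_dvd {k i N : ℕ} (h : k ^ (i + 1) ∣ N) (A : ℕ) :
    A % N / k ^ i % k = A / k ^ i % k := by
  rw [← mod_mul_right_div_self, ← pow_succ, mod_mod_of_dvd _ h, pow_succ, mod_mul_right_div_self]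

theorem pow_mul_add_div_pow_add {k j m c : ℕ} (hc : c < k ^ j) (x : ℕ) :
    (k ^ j * x + c) / k ^ (j + m) = x / k ^ m := by
  rw [pow_add, ← Nat.div_div_eq_div_mul, mul_add_div (by omega), div_eq_of_lt hc, add_zero]

theorem mul_div_mod_pow_add_mod (k j y : ℕ) : k * (y / k % k ^ j) + y % k = y % k ^ (j + 1) := by
  rw [pow_succ', mod_mul]
  ring

end Nat

section ShiftMap

variable {N k t : ℕ} {f : ℕ → ℕ}

theorem iterate_shift_step (hdvd : k ^ t ∣ N) (hf : ∀ A, f A = (k * A + A / k ^ (t - 1) % k) % N)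
    {j x : ℕ} (hj : j < t) (hkj : 0 < k ^ j) :
    f ((k ^ j * x + x / k ^ (t - j) % k ^ j) % N)
      = (k ^ (j + 1) * x + x / k ^ (t - (j + 1)) % k ^ (j + 1)) % N := by
  set c := x / k ^ (t - j) % k ^ j
  set d := x / k ^ (t - (j + 1)) % k
  have hc : c < k ^ j := Nat.mod_lt _ hkj
  have hdigit : (k ^ j * x + c) % N / k ^ (t - 1) % k = d := by
    rw [Nat.mod_div_pow_mod_of_pow_succ_dvd (by rwa [Nat.sub_add_cancel (by omega)]),
      show t - 1 = j + (t - (j + 1)) by omega, Nat.pow_mul_add_div_pow_add hc]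
  have hlow : k * c + d = x / k ^ (t - (j + 1)) % k ^ (j + 1) := by
    rw [← Nat.mul_div_mod_pow_add_mod, Nat.div_div_eq_div_mul, ← pow_succ,
      show t - (j + 1) + 1 = t - j by omega]
  rw [hf, hdigit, ← hlow, show k ^ (j + 1) * x + (k * c + d) = k * (k ^ j * x + c) + d by ring]
  exact ((Nat.mod_modEq _ N).mul_left k).add_right _

theorem iterate_shift_eq (hdvd : k ^ t ∣ N) (hf : ∀ A, f A = (k * A + A / k ^ (t - 1) % k) % N)
    {x : ℕ} (hx : x < N) {j : ℕ} (hj : j ≤ t) :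
    f^[j] x = (k ^ j * x + x / k ^ (t - j) % k ^ j) % N := by
  induction j with
  | zero => simp [Nat.mod_one, Nat.mod_eq_of_lt hx]
  | succ j ih =>
    have hkj : 0 < k ^ j :=
      Nat.pos_of_dvd_of_pos ((pow_dvd_pow k (by omega)).trans hdvd) (by omega)
    rw [Function.iterate_succ_apply', ih (by omega), iterate_shift_step hdvd hf (by omega) hkj]

end ShiftMap

theorem iterate_t_formula_general (N k t q : ℕ) (hN : N = k ^ t * q) (f : ℕ → ℕ)
    (hf : ∀ A, f A = (k * A + A / k ^ (t - 1) % k) % N) :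
    ∀ x < N, f^[t] x = (k ^ t * x + x % k ^ t) % N := by
  intro x hx
  rw [iterate_shift_eq (hN ▸ dvd_mul_right _ _) hf hx le_rfl, Nat.sub_self, pow_zero, Nat.div_one]

theorem iterate_t_formula (N k t q : ℕ) (hk : 2 ≤ k) (ht : 1 ≤ t) (hq : 1 ≤ q)
    (hco : Nat.Coprime q k) (hN : N = k ^ t * q)
    (f : ℕ → ℕ) (hf : ∀ A, f A = (k * A + A / k ^ (t - 1) % k) % N) :
    ∀ x < N, f^[t] x = (k ^ t * x + x % k ^ t) % N :=
  iterate_t_formula_general N k t q hN f hf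
end

section
/- Let N = k^t q with k ≥ 2, t ≥ 1, gcd(q,k)=1, and let f(A) = (kA + A_{t-1}) mod N as above. Let M = ord_k(N-q) be the multiplicative order of k modulo N - q. Then f^M(x) = x for every x ∈ {0,...,N-1}; i.e., every cycle length of f divides ord_k(N-q). -/
/-!
Write `A = k ^ t * m + x` with `x < k ^ t`. One step of `f` rotates the `t` base-`k` digits of `x`
and replaces `m` by `k * m + d` modulo `q`, where `d` is the leading digit of `x`. Consequently the
collapsed value `(k ^ t - 1) * m + x`, read modulo `N - q = (k ^ t - 1) * q`, is multiplied by `k`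
at every step, and so returns to itself after `ord_k (N - q)` steps. On `[0, N)` the collapse is
injective except that it identifies `x = 0` with `x = k ^ t - 1` (shifting `m` by one); the rotation
keeps `x = 0` invariant, which resolves this ambiguity.
-/

def shiftMap (k t q A : ℕ) : ℕ := (k * A + A / k ^ (t - 1) % k) % (k ^ t * q)

def collapse (P A : ℕ) : ℕ := (P - 1) * (A / P) + A % P

lemma mul_add_lt_mul_of_lt {k a b u : ℕ} (ha : a < u) (hb : b < k) : k * a + b < k * u :=
  calc k * a + b < k * (a + 1) := by rw [mul_add_one]; omega
    _ ≤ k * u := Nat.mul_le_mul_left k ha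

section ShiftMap

variable {k t : ℕ}

lemma mul_add_leadingDigit_eq (ht : t ≠ 0) (A : ℕ) :
    k * A + A / k ^ (t - 1) % k
      = k ^ t * (A / k ^ (t - 1)) + (k * (A % k ^ (t - 1)) + A / k ^ (t - 1) % k) := by
  nth_rw 1 [← Nat.div_add_mod A (k ^ (t - 1))]
  rw [← pow_sub_one_mul ht k]
  ring

lemma mul_mod_add_leadingDigit_lt (hk : 0 < k) (ht : t ≠ 0) (A : ℕ) :
    k * (A % k ^ (t - 1)) + A / k ^ (t - 1) % k < k ^ t := by
  rw [← pow_sub_one_mul ht k, mul_comm (k ^ (t - 1))]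
  exact mul_add_lt_mul_of_lt (Nat.mod_lt _ (by positivity)) (Nat.mod_lt _ hk)

lemma mod_pow_eq_mod_add_leadingDigit (ht : t ≠ 0) (A : ℕ) :
    A % k ^ t = A % k ^ (t - 1) + k ^ (t - 1) * (A / k ^ (t - 1) % k) := by
  rw [← pow_sub_one_mul ht k, Nat.mod_mul]

variable (q : ℕ)

lemma shiftMap_mod_pow (hk : 0 < k) (ht : t ≠ 0) (A : ℕ) :
    shiftMap k t q A % k ^ t = k * (A % k ^ (t - 1)) + A / k ^ (t - 1) % k := by
  rw [shiftMap, Nat.mod_mul_right_mod, mul_add_leadingDigit_eq ht, Nat.mul_add_mod,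
    Nat.mod_eq_of_lt (mul_mod_add_leadingDigit_lt hk ht A)]

lemma shiftMap_div_pow (hk : 0 < k) (ht : t ≠ 0) (A : ℕ) :
    shiftMap k t q A / k ^ t = A / k ^ (t - 1) % q := by
  rw [shiftMap, Nat.mod_mul_right_div_self, mul_add_leadingDigit_eq ht,
    Nat.mul_add_div (by positivity), Nat.div_eq_of_lt (mul_mod_add_leadingDigit_lt hk ht A),
    add_zero]

lemma collapse_shiftMap (hk : 0 < k) (ht : t ≠ 0) (A : ℕ) :
    (collapse (k ^ t) (shiftMap k t q A) : ZMod (k ^ t * q - q)) = k * collapse (k ^ t) A := by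
  have hP : 1 ≤ k ^ t := Nat.one_le_pow _ _ hk
  have hA_div : A / k ^ t = A / k ^ (t - 1) / k := by
    rw [Nat.div_div_eq_div_mul, pow_sub_one_mul ht]
  rw [collapse, collapse, shiftMap_div_pow q hk ht, shiftMap_mod_pow q hk ht, hA_div,
    mod_pow_eq_mod_add_leadingDigit ht]
  set Q := A / k ^ (t - 1)
  have hzero : ((k ^ t * q - q : ℕ) : ZMod (k ^ t * q - q)) = 0 := ZMod.natCast_self _
  have hQk : ((k * (Q / k) + Q % k : ℕ) : ZMod (k ^ t * q - q)) = Q := by rw [Nat.div_add_mod]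
  have hQq : ((q * (Q / q) + Q % q : ℕ) : ZMod (k ^ t * q - q)) = Q := by rw [Nat.div_add_mod]
  have hPk : (k : ZMod (k ^ t * q - q)) ^ t = k ^ (t - 1) * k := (pow_sub_one_mul ht _).symm
  push_cast [Nat.cast_sub hP, Nat.cast_sub (Nat.le_mul_of_pos_left q hP)] at hzero hQk hQq ⊢
  -- the heart of it: `(k ^ t - 1) * (Q % q) ≡ (k ^ t - 1) * Q` modulo `(k ^ t - 1) * q`
  linear_combination ((k : ZMod (k ^ t * q - q)) ^ t - 1) * (hQq - hQk)
    - ((Q / q : ℕ) : ZMod (k ^ t * q - q)) * hzero + ((Q % k : ℕ) : ZMod (k ^ t * q - q)) * hPk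

lemma collapse_shiftMap_iterate (hk : 0 < k) (ht : t ≠ 0) (n A : ℕ) :
    (collapse (k ^ t) ((shiftMap k t q)^[n] A) : ZMod (k ^ t * q - q))
      = k ^ n * collapse (k ^ t) A := by
  have hsemiconj : Function.Semiconj (fun A ↦ (collapse (k ^ t) A : ZMod (k ^ t * q - q)))
      (shiftMap k t q) (fun z ↦ k * z) := collapse_shiftMap q hk ht
  simpa only [mul_left_iterate] using hsemiconj.iterate_right n A

lemma shiftMap_mod_pow_eq_zero_iff (hk : 0 < k) (ht : t ≠ 0) (A : ℕ) :
    shiftMap k t q A % k ^ t = 0 ↔ A % k ^ t = 0 := by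
  rw [shiftMap_mod_pow q hk ht, mod_pow_eq_mod_add_leadingDigit ht]
  simp [hk.ne']

lemma shiftMap_iterate_mod_pow_eq_zero_iff (hk : 0 < k) (ht : t ≠ 0) (n A : ℕ) :
    (shiftMap k t q)^[n] A % k ^ t = 0 ↔ A % k ^ t = 0 := by
  have hsemiconj : Function.Semiconj (fun A ↦ A % k ^ t = 0) (shiftMap k t q) id :=
    fun A ↦ propext (shiftMap_mod_pow_eq_zero_iff q hk ht A)
  simpa only [Function.iterate_id, id] using (hsemiconj.iterate_right n A).to_iff

end ShiftMap

lemma eq_of_collapse_eq {P q A B : ℕ} (hP : 2 ≤ P) (hA : A < P * q) (hB : B < P * q)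
    (h : (collapse P A : ZMod (P * q - q)) = collapse P B) (h0 : A % P = 0 ↔ B % P = 0) :
    A = B := by
  rw [ZMod.natCast_eq_natCast_iff, ← Nat.sub_one_mul] at h
  have hAP := Nat.mod_lt A (by omega : 0 < P)
  have hBP := Nat.mod_lt B (by omega : 0 < P)
  have hx : A % P = B % P := by
    have h1 : A % P ≡ B % P [MOD P - 1] := by
      simpa only [collapse, Nat.ModEq, Nat.mul_add_mod] using h.of_mul_right q
    by_cases hA0 : A % P = 0
    · rw [hA0, h0.1 hA0]
    have hB0 : B % P ≠ 0 := fun hB0 ↦ hA0 (h0.2 hB0)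
    have h2 : A % P - 1 ≡ B % P - 1 [MOD P - 1] :=
      Nat.ModEq.add_right_cancel' 1 (by rwa [Nat.sub_add_cancel (by omega),
        Nat.sub_add_cancel (by omega)])
    have := h2.eq_of_lt_of_lt (by omega) (by omega)
    omega
  have hm : A / P = B / P := by
    have h2 : (P - 1) * (A / P) ≡ (P - 1) * (B / P) [MOD (P - 1) * q] :=
      Nat.ModEq.add_right_cancel' (A % P) (by rwa [collapse, collapse, ← hx] at h)
    exact (Nat.ModEq.mul_left_cancel' (by omega) h2).eq_of_lt_of_lt
      (Nat.div_lt_of_lt_mul hA) (Nat.div_lt_of_lt_mul hB)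
  rw [← Nat.div_add_mod A P, ← Nat.div_add_mod B P, hx, hm]

theorem cycle_length_dvd_order_general (N k t q : ℕ) (hk : 2 ≤ k) (ht : 1 ≤ t)
    (hN : N = k ^ t * q)
    (f : ℕ → ℕ) (hf : ∀ A, f A = (k * A + A / k ^ (t - 1) % k) % N) :
    ∀ x < N, f^[orderOf (k : ZMod (N - q))] x = x := by
  obtain rfl : f = shiftMap k t q := funext fun A ↦ by rw [hf, hN, shiftMap]
  subst hN
  intro x hx
  have hk0 : 0 < k := by omega
  have ht0 : t ≠ 0 := by omega
  set M := orderOf (k : ZMod (k ^ t * q - q))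
  have hiter_lt : (shiftMap k t q)^[M] x < k ^ t * q :=
    Set.MapsTo.iterate (s := Set.Iio (k ^ t * q)) (fun _ _ ↦ Nat.mod_lt _ (by omega)) M hx
  refine eq_of_collapse_eq ((Nat.le_self_pow ht0 k).trans' hk) hiter_lt hx ?_
    (shiftMap_iterate_mod_pow_eq_zero_iff q hk0 ht0 M x)
  rw [collapse_shiftMap_iterate q hk0 ht0, pow_orderOf_eq_one, one_mul]

theorem cycle_length_dvd_order (N k t q : ℕ) (hk : 2 ≤ k) (ht : 1 ≤ t) (hq : 1 ≤ q)
    (hco : Nat.Coprime q k) (hN : N = k ^ t * q)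
    (f : ℕ → ℕ) (hf : ∀ A, f A = (k * A + A / k ^ (t - 1) % k) % N) :
    ∀ x < N, f^[orderOf (k : ZMod (N - q))] x = x :=
  cycle_length_dvd_order_general N k t q hk ht hN f hf
end

section
/- Let N = k^t q, k ≥ 2, t ≥ 1, gcd(q,k)=1, and r, t ≥ 1. Suppose x ∈ {0,...,N-1} has x = A' + m k^t where 0 ≤ A' < k^t. Then the congruence k^{rt} x + (Σ_{i=0}^{r-1} k^{it}) A' ≡ x (mod N) holds if and only if (k^{rt} - 1)(A' + m(k^t - 1)) ≡ 0 (mod (k^t - 1) q). -/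
theorem congruence_equivalence (N k t q r : ℕ) (hk : 2 ≤ k) (ht : 1 ≤ t) (hq : 1 ≤ q)
    (hr : 1 ≤ r) (hco : Nat.Coprime q k) (hN : N = k ^ t * q)
    (x A' m : ℤ) (hA'0 : 0 ≤ A') (hA' : A' < (k : ℤ) ^ t)
    (hx : x = A' + m * (k : ℤ) ^ t) (hx0 : 0 ≤ x) (hxN : x < (N : ℤ)) :
    ((k : ℤ) ^ (r * t) * x + (∑ i ∈ Finset.range r, (k : ℤ) ^ (i * t)) * A' ≡ x [ZMOD (N : ℤ)])
      ↔ ((k : ℤ) ^ (r * t) - 1) * (A' + m * ((k : ℤ) ^ t - 1)) ≡ 0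
          [ZMOD (((k : ℤ) ^ t - 1) * (q : ℤ))] := by
  have hpow : ∀ i : ℕ, (k : ℤ) ^ (i * t) = ((k : ℤ) ^ t) ^ i := fun i => by
    rw [← pow_mul, mul_comm]
  set K : ℤ := (k : ℤ) ^ t with hKdef
  have hk2 : (2 : ℤ) ≤ (k : ℤ) := by exact_mod_cast hk
  have hK2 : (2 : ℤ) ≤ K := by
    calc (2 : ℤ) ≤ (k : ℤ) := hk2
    _ = (k : ℤ) ^ 1 := (pow_one _).symm
    _ ≤ K := pow_le_pow_right₀ (by linarith) ht
  have hK0 : K ≠ 0 := by linarith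
  have hK1 : K - 1 ≠ 0 := by linarith
  set S : ℤ := ∑ i ∈ Finset.range r, K ^ i with hS
  have hgeom : S * (K - 1) = K ^ r - 1 := geom_sum_mul K r
  have hKr : K ^ r = S * (K - 1) + 1 := by linarith
  have key : x - (K ^ r * x + S * A') = -(K * (S * (A' + m * (K - 1)))) := by
    rw [hx, hKr]; ring
  have key2 : 0 - (K ^ r - 1) * (A' + m * (K - 1)) = -((K - 1) * (S * (A' + m * (K - 1)))) := by
    rw [hKr]; ring
  simp only [hpow, ← hKdef, ← hS]
  rw [Int.modEq_iff_dvd, Int.modEq_iff_dvd, key, key2, dvd_neg, dvd_neg, hN]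
  push_cast
  rw [← hKdef, mul_dvd_mul_iff_left hK0, mul_dvd_mul_iff_left hK1]
end
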